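/- Let k = 2^a be a power of 2 and let T_1, …, T_k be a sequence of binary trees where T_1 is a single leaf and T_{j+1} is obtained from T_j by splitting a leaf ℓ_j of T_j into two children (so T_j has exactly j leaves). Then the number of indices j ∈ {1,…,k} with |ℓ_j| < log₂(j) − 2 is at most k/4. -/

import Mathlib

/-- A binary decision tree over `{-1,1}^d` (inputs encoded as `Fin d → Bool`):
each internal node queries a coordinate. -/
inductive DTree (d : ℕ) : Type where
  | leaf : DTree d
  | node : Fin d → DTree d → DTree d → DTree d

namespace DTree

variable {d : ℕ}

/-- The root-to-leaf path followed by input `x` (`false` = left/−1, `true` = right/+1). -/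
def pathOf : DTree d → (Fin d → Bool) → List Bool
  | .leaf, _ => []
  | .node i l r, x => if x i then true :: pathOf r x else false :: pathOf l x

/-- The list of root-to-leaf paths of all leaves of the tree. -/
def leafPaths : DTree d → List (List Bool)
  | .leaf => [[]]
  | .node _ l r => (leafPaths l).map (false :: ·) ++ (leafPaths r).map (true :: ·)

/-- `p` is the path to a leaf of the tree. -/
inductive IsLeafPath : DTree d → List Bool → Prop
  | leaf : IsLeafPath .leaf []
  | left {i : Fin d} {l r : DTree d} {p : List Bool} :
      IsLeafPath l p → IsLeafPath (.node i l r) (false :: p)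
  | right {i : Fin d} {l r : DTree d} {p : List Bool} :
      IsLeafPath r p → IsLeafPath (.node i l r) (true :: p)

/-- The coordinates queried along path `p`. -/
def queriedOn : DTree d → List Bool → List (Fin d)
  | .node i l _, false :: p => i :: queriedOn l p
  | .node i _ r, true :: p => i :: queriedOn r p
  | _, _ => []

/-- `SplitAt T p i T'`: `T'` is obtained from `T` by splitting the leaf at path `p`
with a query to coordinate `i`. -/
inductive SplitAt : DTree d → List Bool → Fin d → DTree d → Prop
  | here (i : Fin d) : SplitAt .leaf [] i (.node i .leaf .leaf)
  | left {i j : Fin d} {l r l' : DTree d} {p : List Bool} :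
      SplitAt l p i l' → SplitAt (.node j l r) (false :: p) i (.node j l' r)
  | right {i j : Fin d} {l r r' : DTree d} {p : List Bool} :
      SplitAt r p i r' → SplitAt (.node j l r) (true :: p) i (.node j l r')

/-- The set of inputs reaching the leaf with path `p`. -/
def reachSet (T : DTree d) (p : List Bool) : Finset (Fin d → Bool) :=
  Finset.univ.filter (fun x => T.pathOf x = p)

/-- Average of `f` over a finite set (conditional expectation under the uniform distribution). -/
noncomputable def condExp (f : (Fin d → Bool) → ℝ) (s : Finset (Fin d → Bool)) : ℝ :=
  (∑ x ∈ s, f x) / s.card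

/-- `𝒢`-impurity of a (partial) tree: `Σ_ℓ 2^{-|ℓ|} 𝒢(E[f_ℓ])`. -/
noncomputable def impurity (G : ℝ → ℝ) (f : (Fin d → Bool) → ℝ) (T : DTree d) : ℝ :=
  ((T.leafPaths).map (fun p => ((2:ℝ) ^ p.length)⁻¹ * G (condExp f (T.reachSet p)))).sum

/-- `LocalGain_{𝒢,f}(ℓ,i)`. -/
noncomputable def localGain (G : ℝ → ℝ) (f : (Fin d → Bool) → ℝ) (T : DTree d)
    (p : List Bool) (i : Fin d) : ℝ :=
  G (condExp f (T.reachSet p))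
    - (1/2 * G (condExp f ((T.reachSet p).filter (fun x => x i = false)))
       + 1/2 * G (condExp f ((T.reachSet p).filter (fun x => x i = true))))

/-- `PurityGain_{𝒢,f}(ℓ,i) = 2^{-|ℓ|}·LocalGain_{𝒢,f}(ℓ,i)`. -/
noncomputable def purityGain (G : ℝ → ℝ) (f : (Fin d → Bool) → ℝ) (T : DTree d)
    (p : List Bool) (i : Fin d) : ℝ :=
  ((2:ℝ) ^ p.length)⁻¹ * localGain G f T p i

/-! Every split happens at a leaf, and a split leaf stays an internal node, so the leaves
`ℓ_j` are distinct nodes. A counted index `j ≤ 2^a` has `|ℓ_j| < log₂ j − 2 ≤ a − 2`, and there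
are fewer than `2^(a−2) = k/4` binary strings of length `< a − 2`. -/

inductive IsInternalPath : DTree d → List Bool → Prop
  | root {i : Fin d} {l r : DTree d} : IsInternalPath (.node i l r) []
  | left {i : Fin d} {l r : DTree d} {p : List Bool} :
      IsInternalPath l p → IsInternalPath (.node i l r) (false :: p)
  | right {i : Fin d} {l r : DTree d} {p : List Bool} :
      IsInternalPath r p → IsInternalPath (.node i l r) (true :: p)

theorem IsLeafPath.not_isInternalPath {T : DTree d} {p : List Bool} (h : IsLeafPath T p) :
    ¬ IsInternalPath T p := by
  induction h with
  | leaf => rintro ⟨⟩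
  | left _ ih => rintro (_ | h); exact ih h
  | right _ ih => rintro (_ | _ | h); exact ih h

namespace SplitAt

variable {T T' : DTree d} {p : List Bool} {i : Fin d}

theorem isLeafPath (h : SplitAt T p i T') : IsLeafPath T p := by
  induction h with
  | here => exact .leaf
  | left _ ih => exact .left ih
  | right _ ih => exact .right ih

theorem isInternalPath (h : SplitAt T p i T') : IsInternalPath T' p := by
  induction h with
  | here => exact .root
  | left _ ih => exact .left ih
  | right _ ih => exact .right ih

theorem isInternalPath_of_isInternalPath (h : SplitAt T p i T') {q : List Bool}
    (hq : IsInternalPath T q) : IsInternalPath T' q := by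
  induction h generalizing q with
  | here => cases hq
  | left _ ih =>
    rcases hq with _ | hq | hq
    exacts [.root, .left (ih hq), .right hq]
  | right _ ih =>
    rcases hq with _ | hq | hq
    exacts [.root, .left hq, .right (ih hq)]

end SplitAt

theorem injOn_splitPath {m n : ℕ} {T : ℕ → DTree d} {p : ℕ → List Bool} {i : ℕ → Fin d}
    (hsplit : ∀ j, m ≤ j → j ≤ n → SplitAt (T j) (p j) (i j) (T (j + 1))) :
    Set.InjOn p (Set.Icc m n) := by
  suffices ∀ j₁ j₂, m ≤ j₁ → j₁ < j₂ → j₂ ≤ n → p j₁ ≠ p j₂ by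
    intro j₁ ⟨hm₁, hn₁⟩ j₂ ⟨hm₂, hn₂⟩ heq
    by_contra hne
    rcases Nat.lt_or_gt_of_ne hne with hlt | hlt
    exacts [this j₁ j₂ hm₁ hlt hn₂ heq, this j₂ j₁ hm₂ hlt hn₁ heq.symm]
  intro j₁ j₂ hm hlt hn heq
  have hinternal : ∀ j, j₁ + 1 ≤ j → j ≤ j₂ → IsInternalPath (T j) (p j₁) := by
    intro j hj
    induction j, hj using Nat.le_induction with
    | base => exact fun _ => (hsplit j₁ hm (by omega)).isInternalPath
    | succ j hj ih => exact fun hj₂ =>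
        (hsplit j (by omega) (by omega)).isInternalPath_of_isInternalPath (ih (by omega))
  refine (hsplit j₂ (by omega) hn).isLeafPath.not_isInternalPath ?_
  exact heq ▸ hinternal j₂ hlt le_rfl

end DTree

/-- Append a `1` to a string and read it in base 2: the codes are distinct and lie in `[1, 2^n)`. -/
theorem card_lt_two_pow_of_length_lt {s : Finset (List Bool)} {n : ℕ}
    (hs : ∀ q ∈ s, q.length < n) : s.card < 2 ^ n := by
  let digitsOf (q : List Bool) : List ℕ := q.map Bool.toNat ++ [1]
  have hdigits : ∀ q, ∀ x ∈ digitsOf q, x < 2 := by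
    intro q x hx
    simp only [digitsOf, List.mem_append, List.mem_map, List.mem_singleton] at hx
    rcases hx with ⟨b, -, rfl⟩ | rfl
    exacts [Bool.toNat_lt b, one_lt_two]
  have hdigits_ofDigits : ∀ q, Nat.digits 2 (Nat.ofDigits 2 (digitsOf q)) = digitsOf q :=
    fun q => Nat.digits_ofDigits 2 one_lt_two _ (hdigits q) (by simp [digitsOf])
  have hcard : s.card ≤ (Finset.Ico 1 (2 ^ n)).card := by
    refine Finset.card_le_card_of_injOn (fun q => Nat.ofDigits 2 (digitsOf q)) ?_ ?_
    · intro q hq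
      have hpos : Nat.ofDigits 2 (digitsOf q) ≠ 0 := fun h0 => by
        simpa [h0, digitsOf] using hdigits_ofDigits q
      have hlt : Nat.ofDigits 2 (digitsOf q) < 2 ^ (q.length + 1) := by
        simpa [digitsOf] using Nat.ofDigits_lt_base_pow_length one_lt_two (hdigits q)
      have := Nat.pow_le_pow_right two_pos (hs q hq)
      simp only [Finset.coe_Ico, Set.mem_Ico]
      omega
    · intro q₁ _ q₂ _ (heq : Nat.ofDigits 2 (digitsOf q₁) = Nat.ofDigits 2 (digitsOf q₂))
      have h := hdigits_ofDigits q₁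
      rw [heq, hdigits_ofDigits q₂, List.append_cancel_right_eq] at h
      refine (List.map_injective_iff.mpr ?_ h).symm
      intro a b; cases a <;> cases b <;> simp
  have := Nat.one_le_two_pow (n := n)
  rw [Nat.card_Ico] at hcard
  omega

theorem two_pow_lt_of_lt_logb {m j : ℕ} (hj : 0 < j) (h : (m : ℝ) < Real.logb 2 j) :
    2 ^ m < j := by
  rw [Real.lt_logb_iff_rpow_lt one_lt_two (by exact_mod_cast hj), Real.rpow_natCast] at h
  exact_mod_cast h

open DTree in
theorem few_splits_shallow_general {d a k : ℕ} (hk : k = 2 ^ a)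
    (T : ℕ → DTree d) (p : ℕ → List Bool) (i : ℕ → Fin d)
    (hsplit : ∀ j, 1 ≤ j → j ≤ k → SplitAt (T j) (p j) (i j) (T (j + 1))) :
    (((Finset.Icc 1 k).filter
        (fun j => ((p j).length : ℝ) < Real.logb 2 j - 2)).card : ℝ) ≤ k / 4 := by
  set S := (Finset.Icc 1 k).filter (fun j => ((p j).length : ℝ) < Real.logb 2 j - 2)
  have hinj : Set.InjOn p S := (injOn_splitPath hsplit).mono fun j hj => by
    simpa using (Finset.mem_filter.mp hj).1
  have hshallow : ∀ q ∈ S.image p, q.length < a - 2 := by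
    simp only [Finset.mem_image, S, Finset.mem_filter, Finset.mem_Icc]
    rintro _ ⟨j, ⟨⟨hj₁, hjk⟩, hlog⟩, rfl⟩
    have := two_pow_lt_of_lt_logb hj₁ (m := (p j).length + 2) (by push_cast; linarith)
    have := (Nat.pow_lt_pow_iff_right one_lt_two).mp (hk ▸ this.trans_le hjk)
    omega
  have hcard : S.card < 2 ^ (a - 2) :=
    Finset.card_image_of_injOn hinj ▸ card_lt_two_pow_of_length_lt hshallow
  have hcard4 : 4 * S.card ≤ k := by
    rcases Nat.lt_or_ge a 2 with ha | ha
    · rw [Nat.sub_eq_zero_of_le ha.le] at hcard; omega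
    · rw [hk, ← Nat.sub_add_cancel ha, pow_add]; omega
  have : (4 * S.card : ℝ) ≤ k := by exact_mod_cast hcard4
  linarith

open DTree in
/-- Let `k = 2^a` and `T_1, …, T_k` a sequence of binary trees where `T_1` is a single
leaf and `T_{j+1}` is obtained from `T_j` by splitting a leaf `ℓ_j` of `T_j`.  Then the
number of indices `j ∈ {1,…,k}` with `|ℓ_j| < log₂ j − 2` is at most `k/4`. -/
theorem few_splits_shallow {d a k : ℕ} (hk : k = 2 ^ a)
    (T : ℕ → DTree d) (p : ℕ → List Bool) (i : ℕ → Fin d)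
    (hT1 : T 1 = .leaf)
    (hsplit : ∀ j, 1 ≤ j → j ≤ k → SplitAt (T j) (p j) (i j) (T (j + 1))) :
    (((Finset.Icc 1 k).filter
        (fun j => ((p j).length : ℝ) < Real.logb 2 j - 2)).card : ℝ) ≤ k / 4 :=
  few_splits_shallow_general hk T p i hsplit
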